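/- arXiv:2508.20923 — 3 statements merged into one kernel-verified Lean document; each statement's English description precedes it below -/
import Mathlib

section
/- Deterministic bad-round bound for combinatorial UCB (core of Proposition 2 on the event that all confidence bounds hold). Let m ≤ n be positive integers, c > 0, Δ > 0, and let 𝒮 be a nonempty family of subsets of {1,…,m}, each of cardinality at most m. For each round t ∈ {1,…,n} let g_t : {1,…,m} → ℝ, let S*_t ∈ argmax_{S∈𝒮} ∑_{i∈S} g_t(i), and suppose selections S_t ∈ 𝒮 are made so that every arm is played at least once during the first m rounds, and for every t > m: (a) the indices u_t satisfy g_t(i) ≤ u_t(i) ≤ g_t(i) + 2c·√(log t / T_{i,t−1}) for all i, where T_{i,t} = #{s ≤ t : i ∈ S_s}; (b) S_t ∈ argmax_{S∈𝒮} ∑_{i∈S} u_t(i); and (c) every S ∈ 𝒮 with ∑_{i∈S} g_t(i) < ∑_{i∈S*_t} g_t(i) satisfies ∑_{i∈S*_t} g_t(i) − ∑_{i∈S} g_t(i) ≥ Δ. Then the number of bad rounds, i.e., rounds t ∈ {m+1,…,n} with ∑_{i∈S_t} g_t(i) < ∑_{i∈S*_t} g_t(i), is at most m·(4m²c²·log(n)/Δ²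 + 1). -/
/-!
On a bad round `t`, optimism `g ≤ u`, the argmax rule and the gap condition give
`Δ ≤ ∑_{i ∈ S_t} 2c √(log t / T_{i,t-1})`, so some arm `i ∈ S_t` has radius at least `Δ / m`,
i.e. `T_{i,t-1} ≤ L := 4 m² c² log n / Δ²`. Charge the round to that arm: the counter
`T_{i,t-1}` takes distinct values on the rounds that play `i`, so each arm is charged at most
`⌊L⌋ + 1` times.
-/

open Finset

lemma exists_div_le_of_le_sum {ι : Type*} {S : Finset ι} {m : ℕ} {Δ : ℝ} (r : ι → ℝ)
    (hΔ : 0 < Δ) (hS : #S ≤ m) (h : Δ ≤ ∑ i ∈ S, r i) : ∃ i ∈ S, Δ / m ≤ r i := by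
  obtain hS0 | hne := S.eq_empty_or_nonempty
  · simp only [hS0, sum_empty] at h
    linarith
  have hm : (0 : ℝ) < m := by exact_mod_cast hne.card_pos.trans_le hS
  refine exists_le_of_sum_le hne ?_
  calc ∑ _i ∈ S, Δ / m = #S * (Δ / m) := by rw [sum_const, nsmul_eq_mul]
    _ ≤ m * (Δ / m) := by gcongr
    _ = Δ := by field_simp
    _ ≤ ∑ i ∈ S, r i := h

lemma le_div_sq_of_le_mul_sqrt_div {a b x T : ℝ} (ha : 0 < a) (hx : 0 ≤ x) (hT : 0 ≤ T)
    (h : a ≤ b * √(x / T)) : T ≤ b ^ 2 * x / a ^ 2 := by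
  have hsq : a ^ 2 ≤ b ^ 2 * x / T :=
    calc a ^ 2 ≤ (b * √(x / T)) ^ 2 := pow_le_pow_left₀ ha.le h 2
      _ = b ^ 2 * x / T := by rw [mul_pow, Real.sq_sqrt (div_nonneg hx hT), mul_div_assoc]
  obtain rfl | hT := hT.eq_or_lt
  · -- `x / 0 = 0`, so here the hypothesis reads `a ≤ 0`
    simp only [div_zero] at hsq
    nlinarith
  rw [le_div_iff₀ hT] at hsq
  rw [le_div_iff₀ (by positivity)]
  linarith

lemma sum_sub_sum_le_sum_radius {ι : Type*} {S S' : Finset ι} {g u r : ι → ℝ}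
    (hlow : ∀ i, g i ≤ u i) (hup : ∀ i, u i ≤ g i + r i)
    (hmax : ∑ i ∈ S', u i ≤ ∑ i ∈ S, u i) :
    ∑ i ∈ S', g i - ∑ i ∈ S, g i ≤ ∑ i ∈ S, r i := by
  have h₁ : ∑ i ∈ S', g i ≤ ∑ i ∈ S', u i := sum_le_sum fun i _ => hlow i
  have h₂ : ∑ i ∈ S, u i ≤ ∑ i ∈ S, g i + ∑ i ∈ S, r i :=
    sum_add_distrib (f := g) ▸ sum_le_sum fun i _ => hup i
  linarith

lemma exists_mem_card_le_of_gap {ι : Type*} [Fintype ι] {S S' : Finset ι} {g u : ι → ℝ}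
    {N : ι → ℕ} {c Δ x : ℝ} (hΔ : 0 < Δ) (hx : 0 ≤ x)
    (hconf : ∀ i, g i ≤ u i ∧ u i ≤ g i + 2 * c * √(x / N i))
    (hmax : ∑ i ∈ S', u i ≤ ∑ i ∈ S, u i) (hgap : Δ ≤ ∑ i ∈ S', g i - ∑ i ∈ S, g i) :
    ∃ i ∈ S, (N i : ℝ) ≤ 4 * Fintype.card ι ^ 2 * c ^ 2 * x / Δ ^ 2 := by
  obtain ⟨i, hiS, hi⟩ := exists_div_le_of_le_sum _ hΔ (card_le_univ S)
    (hgap.trans (sum_sub_sum_le_sum_radius (fun i => (hconf i).1) (fun i => (hconf i).2) hmax))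
  have hm : (0 : ℝ) < Fintype.card ι := by exact_mod_cast Fintype.card_pos_iff.mpr ⟨i⟩
  refine ⟨i, hiS, ?_⟩
  convert le_div_sq_of_le_mul_sqrt_div (by positivity) hx (Nat.cast_nonneg _) hi using 1
  field_simp
  ring

lemma card_filter_Icc_one_sub_one_eq_count (p : ℕ → Prop) [DecidablePred p] (t : ℕ) :
    #{s ∈ Icc 1 (t - 1) | p s} = Nat.count (fun s => 1 ≤ s ∧ p s) t := by
  rw [Nat.count_eq_card_filter_range]
  congr 1
  ext s
  simp only [mem_filter, mem_Icc, mem_range]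
  grind

lemma card_filter_count_le (p : ℕ → Prop) [DecidablePred p] (I : Finset ℕ) (k : ℕ) :
    #{t ∈ I | p t ∧ Nat.count p t ≤ k} ≤ k + 1 := by
  rw [← card_range (k + 1)]
  refine card_le_card_of_injOn (Nat.count p) (fun t ht => ?_) (fun t ht t' ht' h => ?_)
  · simp only [coe_filter, Set.mem_ofPred_eq] at ht
    simpa [Nat.lt_succ_iff] using ht.2.2
  · simp only [coe_filter, Set.mem_ofPred_eq] at ht ht'
    exact Nat.count_injective ht.2.1 ht'.2.1 h

theorem cobrah_sb_bad_rounds_bound_general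
    (m n : ℕ)
    (c Δ : ℝ) (hΔ : 0 < Δ)
    (𝒮 : Finset (Finset (Fin m)))
    (g u : ℕ → Fin m → ℝ)
    (Sstar Ssel : ℕ → Finset (Fin m))
    (hstar_mem : ∀ t, Sstar t ∈ 𝒮)
    (hsel_mem : ∀ t, Ssel t ∈ 𝒮)
    (hconf : ∀ t, m < t → t ≤ n → ∀ i : Fin m,
      g t i ≤ u t i ∧
        u t i ≤ g t i + 2 * c * Real.sqrt (Real.log t /
          (((Finset.Icc 1 (t - 1)).filter (fun s => i ∈ Ssel s)).card : ℝ)))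
    (hargmax : ∀ t, m < t → t ≤ n → ∀ S ∈ 𝒮, ∑ i ∈ S, u t i ≤ ∑ i ∈ Ssel t, u t i)
    (hgap : ∀ t, m < t → t ≤ n → ∀ S ∈ 𝒮,
      ∑ i ∈ S, g t i < ∑ i ∈ Sstar t, g t i →
        Δ ≤ ∑ i ∈ Sstar t, g t i - ∑ i ∈ S, g t i) :
    (((Finset.Icc (m + 1) n).filter
        (fun t => ∑ i ∈ Ssel t, g t i < ∑ i ∈ Sstar t, g t i)).card : ℝ)
      ≤ m * (4 * m ^ 2 * c ^ 2 * Real.log n / Δ ^ 2 + 1) := by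
  set L := 4 * m ^ 2 * c ^ 2 * Real.log n / Δ ^ 2
  have hL : 0 ≤ L := by have := Real.log_natCast_nonneg n; positivity
  let played (i : Fin m) (s : ℕ) : Prop := 1 ≤ s ∧ i ∈ Ssel s
  let A (i : Fin m) : Finset ℕ :=
    {t ∈ Icc (m + 1) n | played i t ∧ Nat.count (played i) t ≤ ⌊L⌋₊}
  have hbad : {t ∈ Icc (m + 1) n | ∑ i ∈ Ssel t, g t i < ∑ i ∈ Sstar t, g t i}
      ⊆ univ.biUnion A := by
    intro t ht
    obtain ⟨ht, hlt⟩ := mem_filter.1 ht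
    obtain ⟨hmt, htn⟩ := mem_Icc.1 ht
    obtain ⟨i, hi, hN⟩ := exists_mem_card_le_of_gap hΔ (Real.log_natCast_nonneg t)
      (hconf t hmt htn) (hargmax t hmt htn _ (hstar_mem t)) (hgap t hmt htn _ (hsel_mem t) hlt)
    have hNL : (Nat.count (played i) t : ℝ) ≤ L := by
      rw [← card_filter_Icc_one_sub_one_eq_count]
      refine hN.trans ?_
      rw [Fintype.card_fin]
      have hlog : Real.log t ≤ Real.log n :=
        Real.log_le_log (by exact_mod_cast (by omega : 0 < t)) (by exact_mod_cast htn)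
      dsimp only [L]
      gcongr
    exact mem_biUnion.2 ⟨i, mem_univ i, mem_filter.2 ⟨ht, ⟨by omega, hi⟩, Nat.le_floor hNL⟩⟩
  have hcount : #(univ.biUnion A) ≤ m * (⌊L⌋₊ + 1) := by
    simpa using card_biUnion_le_card_mul univ A _ fun i _ => card_filter_count_le (played i) _ _
  calc _ ≤ ((m * (⌊L⌋₊ + 1) : ℕ) : ℝ) := by exact_mod_cast (card_le_card hbad).trans hcount
    _ ≤ m * (L + 1) := by push_cast; gcongr; exact Nat.floor_le hL

/-- **Deterministic bad-round bound for combinatorial UCB (core of Proposition 2).**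
If every arm is played once during the first `m` rounds, the UCB indices are valid with
confidence radii `2c√(log t / T_{i,t-1})`, the algorithm maximizes the total index over the
family `𝒮`, and every suboptimal super-arm has gap at least `Δ`, then the number of bad
rounds among `t ∈ {m+1,…,n}` is at most `m * (4 m² c² log n / Δ² + 1)`. -/
theorem cobrah_sb_bad_rounds_bound
    (m n : ℕ) (hm : 0 < m) (hmn : m ≤ n)
    (c Δ : ℝ) (hc : 0 < c) (hΔ : 0 < Δ)
    (𝒮 : Finset (Finset (Fin m))) (h𝒮 : 𝒮.Nonempty)
    (hcard : ∀ S ∈ 𝒮, S.card ≤ m)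
    (g u : ℕ → Fin m → ℝ)
    (Sstar Ssel : ℕ → Finset (Fin m))
    (hstar_mem : ∀ t, Sstar t ∈ 𝒮)
    (hstar_opt : ∀ t, ∀ S ∈ 𝒮, ∑ i ∈ S, g t i ≤ ∑ i ∈ Sstar t, g t i)
    (hsel_mem : ∀ t, Ssel t ∈ 𝒮)
    (hinit : ∀ i : Fin m, ∃ s, 1 ≤ s ∧ s ≤ m ∧ i ∈ Ssel s)
    (hconf : ∀ t, m < t → t ≤ n → ∀ i : Fin m,
      g t i ≤ u t i ∧
        u t i ≤ g t i + 2 * c * Real.sqrt (Real.log t /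
          (((Finset.Icc 1 (t - 1)).filter (fun s => i ∈ Ssel s)).card : ℝ)))
    (hargmax : ∀ t, m < t → t ≤ n → ∀ S ∈ 𝒮, ∑ i ∈ S, u t i ≤ ∑ i ∈ Ssel t, u t i)
    (hgap : ∀ t, m < t → t ≤ n → ∀ S ∈ 𝒮,
      ∑ i ∈ S, g t i < ∑ i ∈ Sstar t, g t i →
        Δ ≤ ∑ i ∈ Sstar t, g t i - ∑ i ∈ S, g t i) :
    (((Finset.Icc (m + 1) n).filter
        (fun t => ∑ i ∈ Ssel t, g t i < ∑ i ∈ Sstar t, g t i)).card : ℝ)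
      ≤ m * (4 * m ^ 2 * c ^ 2 * Real.log n / Δ ^ 2 + 1) :=
  cobrah_sb_bad_rounds_bound_general m n c Δ hΔ 𝒮 g u Sstar Ssel hstar_mem hsel_mem hconf hargmax
    hgap
end

section
/- Suppose at round t all upper confidence bounds are valid and a bad round occurs: that is, there are g, u : {1,…,m} → ℝ, counts T_i ≥ 1 for i in the selected set S ⊆ {1,…,m} with |S| ≤ m, a constant c > 0, and a time index t ≤ n with n ≥ 2, such that g_i ≤ u_i ≤ g_i + 2c·√(log t / T_i) for all i ∈ S, u_j ≥ g_j for all j in an optimal set S*, ∑_{i∈S} u_i ≥ ∑_{j∈S*} u_j, and ∑_{j∈S*} g_j − ∑_{i∈S} g_i ≥ Δ > 0. Then min_{i∈S} T_i ≤ 4m²c²·log(n)/Δ². In words: when the confidence bounds hold, a suboptimal super-arm with gap at least Δ can only be selected if some chosen arm has been played at most 4m²c²·log(n)/Δ² times. -/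
/-!
Since the indices of `S*` are optimistic and `S` maximizes the index sum, the gap of `S` is
at most the total confidence width `∑_{i ∈ S} (u_i - g_i)`. Each width is at most
`2c √(log n / min_S T)`, so `Δ ≤ 2mc √(log n / min_S T)`, and squaring gives the bound.
-/

open Real Finset

lemma Real.log_natCast_le_log_natCast {t n : ℕ} (h : t ≤ n) : log t ≤ log n := by
  rcases t.eq_zero_or_pos with rfl | ht
  · simpa using log_natCast_nonneg n
  · exact log_le_log (Nat.cast_pos.mpr ht) (Nat.cast_le.mpr h)

lemma suboptimality_gap_le_sum_index_excess {ι : Type*} (S Sstar : Finset ι) (g u : ι → ℝ)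
    (hvalid : ∀ j ∈ Sstar, g j ≤ u j) (hsel : ∑ j ∈ Sstar, u j ≤ ∑ i ∈ S, u i) :
    ∑ j ∈ Sstar, g j - ∑ i ∈ S, g i ≤ ∑ i ∈ S, (u i - g i) := by
  rw [sum_sub_distrib]
  linarith [sum_le_sum hvalid]

lemma le_mul_div_sq_of_le_mul_sqrt {Δ a L K : ℝ} (hΔ : 0 < Δ) (hK : 0 < K) (hL : 0 ≤ L)
    (h : Δ ≤ a * √(L / K)) : K ≤ a ^ 2 * L / Δ ^ 2 := by
  have hsq : Δ ^ 2 ≤ a ^ 2 * (L / K) := by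
    calc Δ ^ 2 ≤ (a * √(L / K)) ^ 2 := pow_le_pow_left₀ hΔ.le h 2
      _ = a ^ 2 * (L / K) := by rw [mul_pow, sq_sqrt (div_nonneg hL hK.le)]
  rw [le_div_iff₀ (by positivity)]
  rw [mul_div_assoc', le_div_iff₀ hK] at hsq
  linarith

theorem bad_round_forces_small_count_general
    (m n t : ℕ) (ht : t ≤ n)
    (c Δ : ℝ) (hc : 0 < c) (hΔ : 0 < Δ)
    (g u : Fin m → ℝ) (T : Fin m → ℕ)
    (S Sstar : Finset (Fin m)) (hS : S.Nonempty)
    (hconf : ∀ i ∈ S, g i ≤ u i ∧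
      u i ≤ g i + 2 * c * Real.sqrt (Real.log t / (T i : ℝ)))
    (hvalid : ∀ j ∈ Sstar, g j ≤ u j)
    (hsel : ∑ j ∈ Sstar, u j ≤ ∑ i ∈ S, u i)
    (hgap : Δ ≤ ∑ j ∈ Sstar, g j - ∑ i ∈ S, g i) :
    ((S.inf' hS T : ℕ) : ℝ) ≤ 4 * m ^ 2 * c ^ 2 * Real.log n / Δ ^ 2 := by
  set K := S.inf' hS T
  rcases K.eq_zero_or_pos with hK0 | hKpos
  · rw [hK0, Nat.cast_zero]
    positivity
  have hK : (0 : ℝ) < K := Nat.cast_pos.mpr hKpos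
  have hwidth : ∀ i ∈ S, u i - g i ≤ 2 * c * √(log n / K) := fun i hi => by
    have hKT : (K : ℝ) ≤ T i := Nat.cast_le.mpr (S.inf'_le T hi)
    have hsqrt : √(log t / T i) ≤ √(log n / K) :=
      sqrt_le_sqrt (div_le_div₀ (log_natCast_nonneg n) (log_natCast_le_log_natCast ht) hK hKT)
    linarith [(hconf i hi).2, mul_le_mul_of_nonneg_left hsqrt (by positivity : 0 ≤ 2 * c)]
  have hcard : (#S : ℝ) ≤ m := by
    exact_mod_cast S.card_le_univ.trans_eq (Fintype.card_fin m)
  have hΔ_le : Δ ≤ 2 * m * c * √(log n / K) :=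
    calc Δ ≤ ∑ i ∈ S, (u i - g i) :=
          hgap.trans (suboptimality_gap_le_sum_index_excess S Sstar g u hvalid hsel)
      _ ≤ #S • (2 * c * √(log n / K)) := S.sum_le_card_nsmul _ _ hwidth
      _ ≤ m * (2 * c * √(log n / K)) := by rw [nsmul_eq_mul]; gcongr
      _ = 2 * m * c * √(log n / K) := by ring
  calc (K : ℝ) ≤ (2 * m * c) ^ 2 * log n / Δ ^ 2 :=
        le_mul_div_sq_of_le_mul_sqrt hΔ hK (log_natCast_nonneg n) hΔ_le
    _ = 4 * m ^ 2 * c ^ 2 * log n / Δ ^ 2 := by ring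

/-- **Intermediate inequality of Proposition 2.** When all confidence bounds hold and a bad
super-arm `S` with suboptimality gap at least `Δ` is nevertheless selected by the
index-maximizing policy, some chosen arm must have small play count:
`min_{i∈S} T_i ≤ 4 m² c² log n / Δ²`. -/
theorem bad_round_forces_small_count
    (m n t : ℕ) (hm : 0 < m) (hn : 2 ≤ n) (ht : t ≤ n)
    (c Δ : ℝ) (hc : 0 < c) (hΔ : 0 < Δ)
    (g u : Fin m → ℝ) (T : Fin m → ℕ)
    (S Sstar : Finset (Fin m)) (hS : S.Nonempty) (hScard : S.card ≤ m)
    (hT : ∀ i ∈ S, 1 ≤ T i)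
    (hconf : ∀ i ∈ S, g i ≤ u i ∧
      u i ≤ g i + 2 * c * Real.sqrt (Real.log t / (T i : ℝ)))
    (hvalid : ∀ j ∈ Sstar, g j ≤ u j)
    (hsel : ∑ j ∈ Sstar, u j ≤ ∑ i ∈ S, u i)
    (hgap : Δ ≤ ∑ j ∈ Sstar, g j - ∑ i ∈ S, g i) :
    ((S.inf' hS T : ℕ) : ℝ) ≤ 4 * m ^ 2 * c ^ 2 * Real.log n / Δ ^ 2 :=
  bad_round_forces_small_count_general m n t ht c Δ hc hΔ g u T S Sstar hS hconf hvalid hsel hgap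
end

section
/- Deterministic bad-round bound for full-feedback combinatorial UCB (core of Corollary 1 on the event that all confidence bounds hold). Let m ≤ n be positive integers, c > 0, and let 𝒮 be a nonempty family of subsets of {1,…,m}. Let r : (ℝ^m) × 𝒮 → ℝ be monotone (g ≤ g' pointwise implies r(g,S) ≤ r(g',S) for all S) and boundedly smooth with strictly increasing modulus F : [0,∞) → [0,∞) (|r(g,S) − r(g',S)| ≤ F(Λ) whenever max_{i∈S}|g_i − g'_i| ≤ Λ). For each round t ∈ {1,…,n} let g_t ∈ ℝ^m and S*_t ∈ argmax_{S∈𝒮} r(g_t, S). Suppose selections S_t ∈ 𝒮 are made so that every arm is played at least once during the first m rounds and for every t > m: (a) g_t(i) ≤ u_t(i) ≤ g_t(i) + 2c·√(log t / T_{i,t−1}) for all i, where T_{i,t} = #{s ≤ t : i ∈ S_s}; (b) S_t ∈ argmax_{S∈𝒮} r(u_t, S); and (c) every suboptimal S ∈ 𝒮 satisfies r(g_t, S*_t) − r(g_t, S) ≥ Δ̄ > 0, where Δ̄ = F(b) for some b > 0. Then the number of rounds t ∈ {m+1,…,n} in which a suboptimal super-arm is selected is at most m·(4c²·log(n)/b²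 + 1). -/
/-!
On a bad round `t` the selected super-arm `S_t` loses at least `Δ̄ = F b` to `S*_t`, while
monotonicity and the choice of `S_t` give `r(g_t, S*_t) ≤ r(u_t, S*_t) ≤ r(u_t, S_t)` and
bounded smoothness gives `r(u_t, S_t) - r(g_t, S_t) ≤ F Λ`, where `Λ` bounds `u_t - g_t` on
`S_t`. As `F` is strictly increasing, some arm `i ∈ S_t` has confidence radius at least `b`,
that is `T_{i,t-1} ≤ 4c² log n / b²`. Since `T_{i,t-1}` strictly increases along the rounds
that play `i`, each arm is blamed for at most `4c² log n / b² + 1` bad rounds.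
-/

open Finset

section PlayCount

variable {α : Type*} [DecidableEq α] (sel : ℕ → Finset α) (i : α)

/-- The paper's `T_{i,s}`. -/
def playCount (s : ℕ) : ℕ := #{q ∈ Icc 1 s | i ∈ sel q}

lemma playCount_sub_one_strictMonoOn :
    StrictMonoOn (fun t => playCount sel i (t - 1)) {t | 0 < t ∧ i ∈ sel t} := by
  rintro t ⟨ht, hi⟩ t' - htt'
  apply card_lt_card
  rw [ssubset_iff_of_subset (filter_subset_filter _ (Icc_subset_Icc_right (by omega)))]
  exact ⟨t, mem_filter.2 ⟨mem_Icc.2 ⟨ht, by omega⟩, hi⟩, fun h => by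
    have := (mem_Icc.1 (mem_filter.1 h).1).2; omega⟩

lemma card_filter_playCount_le {A : Finset ℕ} (hA : ∀ t ∈ A, 0 < t) {L : ℝ} (hL : 0 ≤ L) :
    (#{t ∈ A | i ∈ sel t ∧ (playCount sel i (t - 1) : ℝ) ≤ L} : ℝ) ≤ L + 1 := by
  have hcard :
      #{t ∈ A | i ∈ sel t ∧ (playCount sel i (t - 1) : ℝ) ≤ L} ≤ #(range (⌊L⌋₊ + 1)) := by
    refine card_le_card_of_injOn (fun t => playCount sel i (t - 1)) ?_ ?_
    · intro t ht
      simpa [Nat.lt_succ_iff] using Nat.le_floor (mem_filter.1 ht).2.2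
    · refine (playCount_sub_one_strictMonoOn sel i).injOn.mono ?_
      intro t ht
      obtain ⟨htA, hi, -⟩ := mem_filter.1 ht
      exact ⟨hA t htA, hi⟩
  rw [card_range] at hcard
  calc _ ≤ ((⌊L⌋₊ + 1 : ℕ) : ℝ) := by exact_mod_cast hcard
    _ ≤ L + 1 := by push_cast; linarith [Nat.floor_le hL]

end PlayCount

lemma card_filter_le_sum_card_filter {ι β : Type*} [Fintype ι] [DecidableEq β] {A : Finset β}
    {P : β → Prop} [DecidablePred P] {Q : ι → β → Prop} [∀ i, DecidablePred (Q i)]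
    (h : ∀ t ∈ A, P t → ∃ i, Q i t) :
    #{t ∈ A | P t} ≤ ∑ i, #{t ∈ A | Q i t} := by
  refine (card_le_card fun t ht => ?_).trans card_biUnion_le
  obtain ⟨htA, hPt⟩ := mem_filter.1 ht
  obtain ⟨i, hi⟩ := h t htA hPt
  exact mem_biUnion.2 ⟨i, mem_univ i, mem_filter.2 ⟨htA, hi⟩⟩

lemma exists_nonneg_lt_forall_le {ι : Type*} (S : Finset ι) {f : ι → ℝ} {b : ℝ} (hb : 0 < b)
    (hf : ∀ i ∈ S, f i < b) : ∃ Λ, 0 ≤ Λ ∧ Λ < b ∧ ∀ i ∈ S, f i ≤ Λ :=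
  ⟨S.fold max 0 f, (le_fold_max 0).2 (Or.inl le_rfl), (fold_max_lt b).2 ⟨hb, hf⟩,
    fun i hi => (le_fold_max (f i)).2 (Or.inr ⟨i, hi, le_rfl⟩)⟩

lemma two_mul_mul_sqrt_div_lt {c x T b : ℝ} (hx : 0 ≤ x) (hb : 0 < b)
    (hT : 4 * c ^ 2 * x / b ^ 2 < T) : 2 * c * √(x / T) < b := by
  have hT0 : 0 < T := lt_of_le_of_lt (by positivity) hT
  rw [div_lt_iff₀ (by positivity)] at hT
  refine lt_of_pow_lt_pow_left₀ 2 hb.le ?_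
  calc (2 * c * √(x / T)) ^ 2 = 4 * c ^ 2 * x / T := by
        rw [mul_pow, Real.sq_sqrt (by positivity)]; ring
    _ < b ^ 2 := by rw [div_lt_iff₀ hT0]; linarith

/-- `hopt` is where monotonicity and the index-maximizing choice of `S` enter. -/
lemma reward_sub_lt_of_index_sub_lt {ι : Type*} {r : (ι → ℝ) → Finset ι → ℝ} {F : ℝ → ℝ}
    (hF : StrictMonoOn F (Set.Ici 0))
    (hsmooth : ∀ (g g' : ι → ℝ) (S : Finset ι) (Λ : ℝ), 0 ≤ Λ →
      (∀ i ∈ S, |g i - g' i| ≤ Λ) → |r g S - r g' S| ≤ F Λ)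
    {g u : ι → ℝ} {S S' : Finset ι} {b : ℝ} (hb : 0 < b) (hopt : r g S' ≤ r u S)
    (hgu : ∀ i ∈ S, g i ≤ u i) (hub : ∀ i ∈ S, u i - g i < b) :
    r g S' - r g S < F b := by
  obtain ⟨Λ, hΛ0, hΛb, hΛ⟩ := exists_nonneg_lt_forall_le S hb hub
  have hsmoothS : r u S - r g S ≤ F Λ :=
    (le_abs_self _).trans <| hsmooth u g S Λ hΛ0 fun i hi =>
      abs_le.2 ⟨by linarith [hgu i hi], hΛ i hi⟩
  linarith [hF hΛ0 hb.le hΛb]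

theorem cobrah_ff_bad_rounds_bound_general
    (m n : ℕ) (c : ℝ)
    (𝒮 : Finset (Finset (Fin m)))
    (r : (Fin m → ℝ) → Finset (Fin m) → ℝ)
    (hmono : ∀ g g' : Fin m → ℝ, (∀ i, g i ≤ g' i) → ∀ S ∈ 𝒮, r g S ≤ r g' S)
    (F : ℝ → ℝ) (hFmono : StrictMonoOn F (Set.Ici (0 : ℝ)))
    (hsmooth : ∀ (g g' : Fin m → ℝ) (S : Finset (Fin m)) (Λ : ℝ), 0 ≤ Λ →
      (∀ i ∈ S, |g i - g' i| ≤ Λ) → |r g S - r g' S| ≤ F Λ)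
    (g u : ℕ → Fin m → ℝ) (Sstar Ssel : ℕ → Finset (Fin m))
    (hstar_mem : ∀ t, Sstar t ∈ 𝒮)
    (hsel_mem : ∀ t, Ssel t ∈ 𝒮)
    (b Δbar : ℝ) (hb : 0 < b) (hΔbar : Δbar = F b)
    (hconf : ∀ t, m < t → t ≤ n → ∀ i : Fin m,
      g t i ≤ u t i ∧
        u t i ≤ g t i + 2 * c * Real.sqrt (Real.log t /
          (((Finset.Icc 1 (t - 1)).filter (fun s => i ∈ Ssel s)).card : ℝ)))
    (hargmax : ∀ t, m < t → t ≤ n → ∀ S ∈ 𝒮, r (u t) S ≤ r (u t) (Ssel t))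
    (hgap : ∀ t, m < t → t ≤ n → ∀ S ∈ 𝒮,
      r (g t) S < r (g t) (Sstar t) → Δbar ≤ r (g t) (Sstar t) - r (g t) S) :
    (((Finset.Icc (m + 1) n).filter
        (fun t => r (g t) (Ssel t) < r (g t) (Sstar t))).card : ℝ)
      ≤ m * (4 * c ^ 2 * Real.log n / b ^ 2 + 1) := by
  set L : ℝ := 4 * c ^ 2 * Real.log n / b ^ 2
  have hL : 0 ≤ L :=
    div_nonneg (mul_nonneg (by positivity) (Real.log_natCast_nonneg n)) (by positivity)
  have hblame : ∀ t ∈ Icc (m + 1) n, r (g t) (Ssel t) < r (g t) (Sstar t) →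
      ∃ i, i ∈ Ssel t ∧ (playCount Ssel i (t - 1) : ℝ) ≤ L := by
    intro t ht hbad
    obtain ⟨hmt, htn⟩ := mem_Icc.1 ht
    by_contra! hlarge
    have hlog : Real.log t ≤ Real.log n :=
      Real.log_le_log (by exact_mod_cast (by omega : 0 < t)) (by exact_mod_cast htn)
    have hub : ∀ i ∈ Ssel t, u t i - g t i < b := fun i hi => by
      have hrad := two_mul_mul_sqrt_div_lt (Real.log_natCast_nonneg t) hb
        (lt_of_le_of_lt (by unfold L; gcongr) (hlarge i hi))
      unfold playCount at hrad
      linarith [(hconf t hmt htn i).2]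
    have hopt := (hmono _ _ (fun i => (hconf t hmt htn i).1) _ (hstar_mem t)).trans
      (hargmax t hmt htn _ (hstar_mem t))
    refine (hgap t hmt htn _ (hsel_mem t) hbad).not_gt ?_
    rw [hΔbar]
    exact reward_sub_lt_of_index_sub_lt hFmono hsmooth hb hopt
      (fun i _ => (hconf t hmt htn i).1) hub
  calc _ ≤ ∑ i : Fin m, (#{t ∈ Icc (m + 1) n | i ∈ Ssel t ∧
          (playCount Ssel i (t - 1) : ℝ) ≤ L} : ℝ) := by
        exact_mod_cast card_filter_le_sum_card_filter hblame
    _ ≤ ∑ _i : Fin m, (L + 1) := sum_le_sum fun i _ =>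
        card_filter_playCount_le Ssel i (fun t ht => by rw [mem_Icc] at ht; omega) hL
    _ = m * (L + 1) := by rw [sum_const, card_univ, Fintype.card_fin, nsmul_eq_mul]

/-- **Deterministic bad-round bound for full-feedback combinatorial UCB (core of
Corollary 1).** Under monotonicity and bounded smoothness of the total reward `r` with a
strictly increasing modulus `F`, valid UCB indices with radii `2c√(log t / T_{i,t-1})`,
index-maximizing selections, and minimal gap `Δ̄ = F b` with `b > 0`, the number of bad
rounds among `t ∈ {m+1,…,n}` is at most `m * (4 c² log n / b² + 1)`. -/
theorem cobrah_ff_bad_rounds_bound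
    (m n : ℕ) (hm : 0 < m) (hmn : m ≤ n) (c : ℝ) (hc : 0 < c)
    (𝒮 : Finset (Finset (Fin m))) (h𝒮 : 𝒮.Nonempty)
    (r : (Fin m → ℝ) → Finset (Fin m) → ℝ)
    (hmono : ∀ g g' : Fin m → ℝ, (∀ i, g i ≤ g' i) → ∀ S ∈ 𝒮, r g S ≤ r g' S)
    (F : ℝ → ℝ) (hFmono : StrictMonoOn F (Set.Ici (0 : ℝ)))
    (hFnonneg : ∀ x : ℝ, 0 ≤ x → 0 ≤ F x)
    (hsmooth : ∀ (g g' : Fin m → ℝ) (S : Finset (Fin m)) (Λ : ℝ), 0 ≤ Λ →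
      (∀ i ∈ S, |g i - g' i| ≤ Λ) → |r g S - r g' S| ≤ F Λ)
    (g u : ℕ → Fin m → ℝ) (Sstar Ssel : ℕ → Finset (Fin m))
    (hstar_mem : ∀ t, Sstar t ∈ 𝒮)
    (hstar_opt : ∀ t, ∀ S ∈ 𝒮, r (g t) S ≤ r (g t) (Sstar t))
    (hsel_mem : ∀ t, Ssel t ∈ 𝒮)
    (hinit : ∀ i : Fin m, ∃ s, 1 ≤ s ∧ s ≤ m ∧ i ∈ Ssel s)
    (b Δbar : ℝ) (hb : 0 < b) (hΔbar : Δbar = F b) (hΔbarpos : 0 < Δbar)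
    (hconf : ∀ t, m < t → t ≤ n → ∀ i : Fin m,
      g t i ≤ u t i ∧
        u t i ≤ g t i + 2 * c * Real.sqrt (Real.log t /
          (((Finset.Icc 1 (t - 1)).filter (fun s => i ∈ Ssel s)).card : ℝ)))
    (hargmax : ∀ t, m < t → t ≤ n → ∀ S ∈ 𝒮, r (u t) S ≤ r (u t) (Ssel t))
    (hgap : ∀ t, m < t → t ≤ n → ∀ S ∈ 𝒮,
      r (g t) S < r (g t) (Sstar t) → Δbar ≤ r (g t) (Sstar t) - r (g t) S) :
    (((Finset.Icc (m + 1) n).filter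
        (fun t => r (g t) (Ssel t) < r (g t) (Sstar t))).card : ℝ)
      ≤ m * (4 * c ^ 2 * Real.log n / b ^ 2 + 1) :=
  cobrah_ff_bad_rounds_bound_general m n c 𝒮 r hmono F hFmono hsmooth g u Sstar Ssel hstar_mem
    hsel_mem b Δbar hb hΔbar hconf hargmax hgap
end
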